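/- Let I be a consistent Nelson interpretation and φ any extended formula. Then I,w ⊨ φ if and only if I,w ⊩⁺ φ, where I,w ⊨ φ is defined as I,w ⊩⁺ (¬~φ ∧ φ) (cw-inference collapses to ordinary forcing on consistent interpretations). -/

import Mathlib

inductive Formula (Atom : Type) : Type
  | bot : Formula Atom
  | atom : Atom → Formula Atom
  | sneg : Formula Atom → Formula Atom
  | conj : Formula Atom → Formula Atom → Formula Atom
  | disj : Formula Atom → Formula Atom → Formula Atom
  | impl : Formula Atom → Formula Atom → Formula Atom
  | dneg : Formula Atom → Formula Atom

structure NelsonInterp (Atom : Type) where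
  W : Type
  le : W → W → Prop
  refl : ∀ w, le w w
  trans : ∀ {w₁ w₂ w₃}, le w₁ w₂ → le w₂ w₃ → le w₁ w₃
  Vp : W → Set Atom
  Vm : W → Set Atom
  monoP : ∀ {w w'}, le w w' → Vp w ⊆ Vp w'
  monoM : ∀ {w w'}, le w w' → Vm w ⊆ Vm w'

mutual
  def forceP {Atom : Type} (I : NelsonInterp Atom) (w : I.W) : Formula Atom → Prop
    | .bot => False
    | .atom a => a ∈ I.Vp w
    | .sneg φ => forceM I w φ
    | .conj φ ψ => forceP I w φ ∧ forceP I w ψ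
    | .disj φ ψ => forceP I w φ ∨ forceP I w ψ
    | .impl φ ψ => ∀ w', I.le w w' → (¬ forceP I w' φ ∨ forceP I w' ψ)
    | .dneg φ => (∀ w', I.le w w' → ¬ forceP I w' φ) ∨ (forceP I w φ ∧ forceM I w φ)
  def forceM {Atom : Type} (I : NelsonInterp Atom) (w : I.W) : Formula Atom → Prop
    | .bot => True
    | .atom a => a ∈ I.Vm w
    | .sneg φ => forceP I w φ
    | .conj φ ψ => forceM I w φ ∨ forceM I w ψ
    | .disj φ ψ => forceM I w φ ∧ forceM I w ψ
    | .impl φ ψ => forceP I w φ ∧ forceM I w ψ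
    | .dneg φ => forceP I w φ ∧ ¬ forceM I w φ
end

def Formula.neg {Atom : Type} (φ : Formula Atom) : Formula Atom := φ.impl .bot

def Formula.supImp {Atom : Type} (φ ψ : Formula Atom) : Formula Atom :=
  ((φ.sneg.neg).conj φ).impl ψ

def Formula.attack {Atom : Type} (φ ψ : Formula Atom) : Formula Atom :=
  φ.supImp ψ.sneg

/-- cw-inference at a world: `I,w ⊨ φ` iff `I,w ⊩⁺ ¬~φ ∧ φ`. -/
def cw {Atom : Type} (I : NelsonInterp Atom) (w : I.W) (φ : Formula Atom) : Prop :=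
  forceP I w ((φ.sneg.neg).conj φ)

/-- `I ⊩⁺ φ` : forcing at all worlds. -/
def forcedP {Atom : Type} (I : NelsonInterp Atom) (φ : Formula Atom) : Prop :=
  ∀ w, forceP I w φ

def forcedM {Atom : Type} (I : NelsonInterp Atom) (φ : Formula Atom) : Prop :=
  ∀ w, forceM I w φ

/-- `I ⊨ φ` : cw-inference at all worlds. -/
def cwAll {Atom : Type} (I : NelsonInterp Atom) (φ : Formula Atom) : Prop :=
  ∀ w, cw I w φ

def NelsonInterp.Consistent {Atom : Type} (I : NelsonInterp Atom) : Prop :=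
  ∀ w, I.Vp w ∩ I.Vm w = ∅

/-- An HT-interpretation: two worlds h ≤ t, given by four sets of atoms. -/
structure HTInterp (Atom : Type) where
  Hp : Set Atom
  Hm : Set Atom
  Tp : Set Atom
  Tm : Set Atom
  subP : Hp ⊆ Tp
  subM : Hm ⊆ Tm

/-- The underlying Nelson interpretation: world `false` is h, world `true` is t. -/
def HTInterp.toNelson {Atom : Type} (I : HTInterp Atom) : NelsonInterp Atom where
  W := Bool
  le := (· ≤ ·)
  refl := le_refl
  trans := le_trans
  Vp := fun w => if w then I.Tp else I.Hp
  Vm := fun w => if w then I.Tm else I.Hm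
  monoP := by
    intro w w' hle
    match w, w', hle with
    | false, false, _ => exact subset_rfl
    | false, true, _ => exact I.subP
    | true, true, _ => exact subset_rfl
    | true, false, h => exact absurd h (by decide)
  monoM := by
    intro w w' hle
    match w, w', hle with
    | false, false, _ => exact subset_rfl
    | false, true, _ => exact I.subM
    | true, true, _ => exact subset_rfl
    | true, false, h => exact absurd h (by decide)


/-!
Consistency at the atoms propagates to every formula: no world forces `φ` both positively and
negatively. This is what keeps forcing persistent along `≤` despite the clauses for `not`, which
are not monotone in general. If `w ⊩⁺ φ`, then every `w' ≥ w` forces `φ`, hence does not force `~φ`,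
which is exactly `w ⊩⁺ ¬~φ`.
-/

namespace NelsonInterp.Consistent

variable {Atom : Type} {I : NelsonInterp Atom}

theorem not_forceM_of_forceP (hI : I.Consistent) (φ : Formula Atom) {w : I.W} :
    forceP I w φ → ¬ forceM I w φ := by
  induction φ generalizing w with
  | bot => exact False.elim
  | atom a => exact fun hp hm => Set.eq_empty_iff_forall_notMem.1 (hI w) a ⟨hp, hm⟩
  | sneg φ ih => exact fun hm hp => ih hp hm
  | conj φ ψ ihφ ihψ => exact fun ⟨hφ, hψ⟩ => not_or_intro (ihφ hφ) (ihψ hψ)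
  | disj φ ψ ihφ ihψ =>
      rintro (hφ | hψ) ⟨mφ, mψ⟩
      exacts [ihφ hφ mφ, ihψ hψ mψ]
  | impl φ ψ _ ihψ =>
      rintro himp ⟨pφ, mψ⟩
      exact (himp w (I.refl w)).elim (· pφ) (ihψ · mψ)
  | dneg φ _ =>
      rintro (hnot | ⟨_, mφ⟩) ⟨pφ, nmφ⟩
      exacts [hnot w (I.refl w) pφ, nmφ mφ]

theorem force_mono (hI : I.Consistent) (φ : Formula Atom) {w w' : I.W} (hle : I.le w w') :
    (forceP I w φ → forceP I w' φ) ∧ (forceM I w φ → forceM I w' φ) := by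
  induction φ with
  | bot => exact ⟨id, id⟩
  | atom a => exact ⟨(I.monoP hle ·), (I.monoM hle ·)⟩
  | sneg φ ih => exact ih.symm
  | conj φ ψ ihφ ihψ => exact ⟨And.imp ihφ.1 ihψ.1, Or.imp ihφ.2 ihψ.2⟩
  | disj φ ψ ihφ ihψ => exact ⟨Or.imp ihφ.1 ihψ.1, And.imp ihφ.2 ihψ.2⟩
  | impl φ ψ ihφ ihψ => exact ⟨fun h w'' hle' => h w'' (I.trans hle hle'), And.imp ihφ.1 ihψ.2⟩
  | dneg φ ih =>
      refine ⟨?_, fun ⟨pφ, _⟩ => ?_⟩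
      · rintro (hnot | ⟨pφ, mφ⟩)
        · exact Or.inl fun w'' hle' => hnot w'' (I.trans hle hle')
        · exact (hI.not_forceM_of_forceP φ pφ mφ).elim
      · have pφ' := ih.1 pφ
        exact ⟨pφ', hI.not_forceM_of_forceP φ pφ'⟩

theorem forceP_neg_sneg_of_forceP (hI : I.Consistent) {φ : Formula Atom} {w : I.W}
    (h : forceP I w φ) : forceP I w φ.sneg.neg :=
  fun _ hle => Or.inl (hI.not_forceM_of_forceP φ ((hI.force_mono φ hle).1 h))

end NelsonInterp.Consistent

theorem cw_iff_forceP_of_consistent {Atom : Type} (I : NelsonInterp Atom)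
    (hI : I.Consistent) (φ : Formula Atom) (w : I.W) :
    cw I w φ ↔ forceP I w φ :=
  ⟨And.right, fun h => ⟨hI.forceP_neg_sneg_of_forceP h, h⟩⟩
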